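/- For a torus action, the orbit O_{ṽ} of ṽ := v|_{esupp(v)} is contained in every orbit closure contained in closure(O_v); consequently O_{ṽ} is the unique closed orbit in closure(O_v), and O_v is closed if and only if the Newton cone C(v) equals its lineality space L(v). -/

import Mathlib

open scoped BigOperators

noncomputable section

/-- Action of the torus `(ℂˣ)^d` on `ℂ^n` given by the integer weight matrix `M`:
coordinate `j` is scaled by the Laurent monomial `∏ i, (t i) ^ (M i j)`. -/
def torusAct {d n : ℕ} (M : Matrix (Fin d) (Fin n) ℤ) (t : Fin d → ℂˣ) (v : Fin n → ℂ) :
    Fin n → ℂ := fun j => (∏ i, (t i : ℂ) ^ M i j) * v j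

/-- The orbit of `v` under the torus action. -/
def torusOrbit {d n : ℕ} (M : Matrix (Fin d) (Fin n) ℤ) (v : Fin n → ℂ) : Set (Fin n → ℂ) :=
  {w | ∃ t : Fin d → ℂˣ, w = torusAct M t v}

/-- The Newton cone `C(v)`: the convex cone generated by the columns `m⁽ʲ⁾` of `M`
for `j` in the support of `v`. -/
def newtonCone {d n : ℕ} (M : Matrix (Fin d) (Fin n) ℤ) (v : Fin n → ℂ) : Set (Fin d → ℝ) :=
  {y | ∃ c : Fin n → ℝ, (∀ j, 0 ≤ c j) ∧ (∀ j, v j = 0 → c j = 0) ∧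
    y = ∑ j, c j • (fun i => (M i j : ℝ))}

/-- The lineality space `L(v) = C(v) ∩ (-C(v))` of the Newton cone. -/
def lineality {d n : ℕ} (M : Matrix (Fin d) (Fin n) ℤ) (v : Fin n → ℂ) : Set (Fin d → ℝ) :=
  newtonCone M v ∩ -newtonCone M v

/-- The essential support: indices `j` in the support of `v` whose weight column
lies in the lineality space of the Newton cone. -/
def esupp {d n : ℕ} (M : Matrix (Fin d) (Fin n) ℤ) (v : Fin n → ℂ) : Set (Fin n) :=
  {j | v j ≠ 0 ∧ (fun i => (M i j : ℝ)) ∈ lineality M v}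

/-!
Choose a linear form `u` that is nonnegative on the Newton cone `C(v)`, vanishes on the weights
of `esupp v` and is positive on the other weights of `supp v`; it exists by Farkas' lemma, since
finitely generated cones are closed. Along the one-parameter subgroup `s ↦ exp (-s u)` the point
`v` tends to `ṽ`, so `ṽ ∈ closure O_v`.

Conversely, for `j ∈ esupp v` the relation `-m⁽ʲ⁾ ∈ C(v)` gives `b ≥ 0` with `b j > 0` and
`∑ b k m⁽ᵏ⁾ = 0`, so `∏ ‖w k‖ ^ b k` is a continuous invariant which is positive on `O_v`; hence
`w j ≠ 0` on `closure O_v`. A point of `closure O_v` with the same support as `v` lies in `O_v`,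
because the image of the monomial map is closed away from the coordinate hyperplanes: after
taking `log ‖·‖` its modulus part is a linear subspace, and its angular part is the image of a
compact torus. Thus `O_ṽ` is closed, every `w ∈ closure O_v` has `esupp w = esupp v`, and the
restriction of such a `w` to `esupp v` lies in `closure O_ṽ = O_ṽ`.
-/

namespace PointedCone

variable {E : Type*} [AddCommGroup E] [Module ℝ E]

lemma mem_hull_finset_iff {t : Finset E} {x : E} :
    x ∈ hull ℝ (t : Set E) ↔ ∃ f : E → ℝ, (∀ e ∈ t, 0 ≤ f e) ∧ ∑ e ∈ t, f e • e = x := by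
  constructor
  · intro hx
    obtain ⟨f, -, rfl⟩ := Submodule.mem_span_finset.1 hx
    exact ⟨fun e => f e, fun e _ => (f e).2, by simp only [Nonneg.coe_smul]⟩
  · rintro ⟨f, hf, rfl⟩
    exact Submodule.sum_mem _ fun e he => smul_mem _ (hf e he) (subset_hull he)

lemma exists_mem_hull_erase_of_not_linearIndepOn [DecidableEq E] {t : Finset E}
    (h : ¬LinearIndepOn ℝ id (t : Set E)) {x : E} (hx : x ∈ hull ℝ (t : Set E)) :
    ∃ e₀ ∈ t, x ∈ hull ℝ (t.erase e₀ : Set E) := by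
  obtain ⟨f, hf, rfl⟩ := mem_hull_finset_iff.1 hx
  obtain ⟨g, hg, e₁, he₁, hge₁⟩ : ∃ g : E → ℝ, ∑ e ∈ t, g e • e = 0 ∧ ∃ e ∈ t, 0 < g e := by
    obtain ⟨g, hg, e₁, he₁, hge₁⟩ := not_linearIndepOn_finset_iff.1 h
    rcases hge₁.lt_or_gt with hneg | hpos
    · exact ⟨-g, by simpa [neg_smul] using hg, e₁, he₁, by simpa using hneg⟩
    · exact ⟨g, hg, e₁, he₁, hpos⟩
  -- Move along the relation `g` until the first coefficient reaches zero.
  obtain ⟨e₀, he₀, hmin⟩ :=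
    (t.filter (0 < g ·)).exists_min_image (fun e => f e / g e) ⟨e₁, by simp [he₁, hge₁]⟩
  rw [Finset.mem_filter] at he₀
  set r := f e₀ / g e₀
  have hr : 0 ≤ r := div_nonneg (hf e₀ he₀.1) he₀.2.le
  refine ⟨e₀, he₀.1, mem_hull_finset_iff.2 ⟨fun e => f e - r * g e, fun e he => ?_, ?_⟩⟩
  · have het := Finset.mem_of_mem_erase he
    rcases le_or_gt (g e) 0 with hge | hge
    · nlinarith [hf e het]
    · rw [sub_nonneg, ← le_div_iff₀ hge]
      exact hmin e (Finset.mem_filter.2 ⟨het, hge⟩)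
  · have hzero : f e₀ - r * g e₀ = 0 := by
      rw [div_mul_cancel₀ _ he₀.2.ne', sub_self]
    rw [Finset.sum_erase _ (by simp only [hzero, zero_smul])]
    simp only [sub_smul, mul_smul, Finset.sum_sub_distrib, ← Finset.smul_sum, hg, smul_zero,
      sub_zero]

lemma exists_linearIndepOn_mem_hull {t : Finset E} {x : E} (hx : x ∈ hull ℝ (t : Set E)) :
    ∃ u ⊆ t, LinearIndepOn ℝ id (u : Set E) ∧ x ∈ hull ℝ (u : Set E) := by
  classical
  induction t using Finset.strongInduction with
  | H t ih =>
    by_cases hli : LinearIndepOn ℝ id (t : Set E)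
    · exact ⟨t, subset_rfl, hli, hx⟩
    obtain ⟨e₀, he₀, hx'⟩ := exists_mem_hull_erase_of_not_linearIndepOn hli hx
    obtain ⟨u, hu, hli', hxu⟩ := ih _ (Finset.erase_ssubset he₀) hx'
    exact ⟨u, hu.trans (Finset.erase_subset _ _), hli', hxu⟩

lemma neg_mem_hull_of_forall_neg_mem {s : Set E} (h : ∀ e ∈ s, -e ∈ hull ℝ s) {x : E}
    (hx : x ∈ hull ℝ s) : -x ∈ hull ℝ s := by
  induction hx using Submodule.span_induction with
  | mem e he => exact h e he
  | zero => simp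
  | add x y _ _ hx hy => simpa [neg_add_rev] using add_mem hy hx
  | smul a x _ hx => simpa [smul_neg] using Submodule.smul_mem _ a hx

lemma mem_hull_sep_of_map_eq_zero {s : Set E} {f : E →ₗ[ℝ] ℝ} (hf : ∀ e ∈ s, 0 ≤ f e) {x : E}
    (hx : x ∈ hull ℝ s) (hfx : f x = 0) : x ∈ hull ℝ {e ∈ s | f e = 0} := by
  obtain ⟨t, hts, hxt⟩ := Submodule.mem_span_finite_of_mem_span hx
  obtain ⟨c, hc, rfl⟩ := mem_hull_finset_iff.1 hxt
  have hterm : ∀ e ∈ t, c e * f e = 0 := by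
    refine (Finset.sum_eq_zero_iff_of_nonneg fun e he => mul_nonneg (hc e he) (hf e (hts he))).1 ?_
    simpa [map_sum, map_smul] using hfx
  refine Submodule.sum_mem _ fun e he => ?_
  rcases mul_eq_zero.1 (hterm e he) with hce | hfe
  · simp [hce]
  · exact smul_mem _ (hc e he) (subset_hull ⟨hts he, hfe⟩)

variable [TopologicalSpace E] [IsTopologicalAddGroup E] [ContinuousSMul ℝ E] [T2Space E]

lemma isClosed_hull_of_linearIndepOn {u : Finset E} (hu : LinearIndepOn ℝ id (u : Set E)) :
    IsClosed (hull ℝ (u : Set E) : Set E) := by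
  let L := Fintype.linearCombination ℝ (fun e : (u : Set E) => (e : E))
  have hL : Topology.IsClosedEmbedding L :=
    L.isClosedEmbedding_of_injective (LinearMap.ker_eq_bot.2 hu.fintypeLinearCombination_injective)
  have himage : (hull ℝ (u : Set E) : Set E) = L '' Set.Ici 0 := by
    ext x
    rw [SetLike.mem_coe, mem_hull_finset_iff]
    constructor
    · rintro ⟨f, hf, rfl⟩
      refine ⟨fun e => f e, fun e => hf e e.2, ?_⟩
      simp only [L, Fintype.linearCombination_apply]
      exact Finset.sum_coe_sort u (fun e => f e • e)
    · rintro ⟨c, hc, rfl⟩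
      classical
      refine ⟨fun e => if he : e ∈ u then c ⟨e, he⟩ else 0,
        fun e he => by simpa [he] using hc ⟨e, he⟩, ?_⟩
      simp only [L, Fintype.linearCombination_apply]
      rw [← Finset.sum_coe_sort u]
      simp
  rw [himage]
  exact hL.isClosedMap _ isClosed_Ici

theorem isClosed_hull_finset (t : Finset E) : IsClosed (hull ℝ (t : Set E) : Set E) := by
  classical
  let S : Finset (Finset E) := t.powerset.filter fun u => LinearIndepOn ℝ id (u : Set E)
  have hunion : (hull ℝ (t : Set E) : Set E) =
      ⋃ (u : Finset E) (_ : u ∈ S), (hull ℝ (u : Set E) : Set E) := by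
    ext x
    simp only [S, SetLike.mem_coe, Set.mem_iUnion, Finset.mem_filter, Finset.mem_powerset,
      exists_prop]
    constructor
    · intro hx
      obtain ⟨u, hu, hli, hxu⟩ := exists_linearIndepOn_mem_hull hx
      exact ⟨u, ⟨hu, hli⟩, hxu⟩
    · rintro ⟨u, ⟨hu, -⟩, hxu⟩
      exact Submodule.span_mono (Finset.coe_subset.2 hu) hxu
  rw [hunion]
  exact isClosed_biUnion_finset fun u hu =>
    isClosed_hull_of_linearIndepOn (Finset.mem_filter.1 hu).2

theorem isClosed_hull_of_finite {s : Set E} (hs : s.Finite) : IsClosed (hull ℝ s : Set E) := by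
  simpa using isClosed_hull_finset hs.toFinset

variable [LocallyConvexSpace ℝ E]

theorem exists_strongDual_pos_of_neg_notMem_hull {s : Set E} (hs : s.Finite) :
    ∃ f : StrongDual ℝ E, (∀ x ∈ hull ℝ s, 0 ≤ f x) ∧ ∀ x ∈ s, -x ∉ hull ℝ s → 0 < f x := by
  classical
  let C : ProperCone ℝ E := ⟨hull ℝ s, isClosed_hull_of_finite hs⟩
  have hsep : ∀ x ∈ s, -x ∉ hull ℝ s →
      ∃ f : StrongDual ℝ E, (∀ y ∈ hull ℝ s, 0 ≤ f y) ∧ 0 < f x := by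
    intro x _ hx
    obtain ⟨f, hfC, hfx⟩ := C.hyperplane_separation_point (x₀ := -x) hx
    exact ⟨f, hfC, by simpa using hfx⟩
  choose! g hgC hgx using hsep
  let S := hs.toFinset.filter fun x => -x ∉ hull ℝ s
  have hS : ∀ z ∈ S, z ∈ s ∧ -z ∉ hull ℝ s := fun z hz => by simpa [S] using hz
  refine ⟨∑ x ∈ S, g x, fun y hy => ?_, fun x hx hnx => ?_⟩
  · rw [sum_apply]
    exact Finset.sum_nonneg fun z hz => hgC z (hS z hz).1 (hS z hz).2 y hy
  · rw [sum_apply]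
    exact Finset.sum_pos' (fun z hz => hgC z (hS z hz).1 (hS z hz).2 x (subset_hull hx))
      ⟨x, by simp [S, hx, hnx], hgx x hx hnx⟩

end PointedCone

open Set Filter Topology Matrix

section Monomial

variable {d : ℕ} {J : Type*}

def monomial (A : Matrix (Fin d) J ℤ) (t : Fin d → ℂ) (j : J) : ℂ := ∏ i, t i ^ A i j

abbrev weight (A : Matrix (Fin d) J ℤ) (j : J) : Fin d → ℝ := fun i => (A i j : ℝ)

variable (A : Matrix (Fin d) J ℤ)

lemma monomial_mul (t s : Fin d → ℂ) (j : J) :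
    monomial A (t * s) j = monomial A t j * monomial A s j := by
  simp only [monomial, Pi.mul_apply, mul_zpow, Finset.prod_mul_distrib]

lemma monomial_div (t s : Fin d → ℂ) (j : J) :
    monomial A (t / s) j = monomial A t j / monomial A s j := by
  simp only [monomial, Pi.div_apply, div_zpow, Finset.prod_div_distrib]

lemma monomial_ne_zero {t : Fin d → ℂ} (ht : ∀ i, t i ≠ 0) (j : J) : monomial A t j ≠ 0 :=
  Finset.prod_ne_zero_iff.2 fun i _ => zpow_ne_zero _ (ht i)

lemma norm_monomial (t : Fin d → ℂ) (j : J) : ‖monomial A t j‖ = ∏ i, ‖t i‖ ^ A i j := by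
  simp only [monomial, norm_prod, norm_zpow]

lemma monomial_ofReal_norm (t : Fin d → ℂ) (j : J) :
    monomial A (fun i => (‖t i‖ : ℂ)) j = ‖monomial A t j‖ := by
  rw [norm_monomial, Complex.ofReal_prod]
  simp only [monomial, Complex.ofReal_zpow]

lemma log_norm_monomial {t : Fin d → ℂ} (ht : ∀ i, t i ≠ 0) (j : J) :
    Real.log ‖monomial A t j‖ = weight A j ⬝ᵥ fun i => Real.log ‖t i‖ := by
  rw [norm_monomial, Real.log_prod fun i _ => zpow_ne_zero _ (norm_ne_zero_iff.2 (ht i))]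
  simp only [Real.log_zpow, dotProduct]

lemma monomial_exp (ζ : Fin d → ℂ) (j : J) :
    monomial A (fun i => Complex.exp (ζ i)) j = Complex.exp (∑ i, A i j * ζ i) := by
  simp only [monomial, Complex.exp_sum, Complex.exp_int_mul]

lemma monomial_exp_ofReal (x : Fin d → ℝ) (j : J) :
    monomial A (fun i => (Real.exp (x i) : ℂ)) j = Real.exp (weight A j ⬝ᵥ x) := by
  simp only [Complex.ofReal_exp, monomial_exp, dotProduct]
  push_cast
  rfl

theorem exists_log_norm_eq_dotProduct_of_mem_closure [Fintype J] {z : J → ℂ}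
    (hz : z ∈ closure (range fun t : Fin d → ℂˣ => monomial A fun i => t i)) (hz0 : ∀ j, z j ≠ 0) :
    ∃ x : Fin d → ℝ, ∀ j, weight A j ⬝ᵥ x = Real.log ‖z j‖ := by
  let Λ : (Fin d → ℝ) →ₗ[ℝ] J → ℝ := mulVecLin (of fun j i => (A i j : ℝ))
  let P : (J → ℂ) → J → ℝ := fun p j => Real.log ‖p j‖
  have hP : ContinuousAt P z := continuousAt_pi.2 fun j =>
    (continuous_apply j).norm.continuousAt.log (norm_ne_zero_iff.2 (hz0 j))
  have hPR : P '' range (fun t : Fin d → ℂˣ => monomial A fun i => t i) ⊆ LinearMap.range Λ := by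
    rintro _ ⟨_, ⟨t, rfl⟩, rfl⟩
    exact ⟨fun i => Real.log ‖(t i : ℂ)‖,
      funext fun j => (log_norm_monomial A (fun i => (t i).ne_zero) j).symm⟩
  obtain ⟨x, hx⟩ := closure_minimal hPR (LinearMap.range Λ).closed_of_finiteDimensional
    (hP.continuousWithinAt.mem_closure_image hz)
  exact ⟨x, fun j => congrFun hx j⟩

theorem exists_monomial_eq_div_norm_of_mem_closure {z : J → ℂ}
    (hz : z ∈ closure (range fun t : Fin d → ℂˣ => monomial A fun i => t i)) (hz0 : ∀ j, z j ≠ 0) :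
    ∃ θ : Fin d → ℂ, (∀ i, θ i ≠ 0) ∧ ∀ j, monomial A θ j = z j / ‖z j‖ := by
  let S : Set (Fin d → ℂ) := pi univ fun _ => Metric.sphere 0 1
  have hS : ∀ θ ∈ S, ∀ i, θ i ≠ 0 := fun θ hθ i =>
    ne_zero_of_mem_unit_sphere ⟨θ i, hθ i (mem_univ i)⟩
  have hK : IsCompact (monomial A '' S) :=
    (isCompact_univ_pi fun _ => isCompact_sphere 0 1).image_of_continuousOn <|
      continuousOn_pi.2 fun j => continuousOn_finsetProd _ fun i _ =>
        (continuousOn_apply i S).zpow₀ _ fun θ hθ => Or.inl (hS θ hθ i)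
  let Q : (J → ℂ) → J → ℂ := fun p j => p j / ‖p j‖
  have hQ : ContinuousAt Q z := continuousAt_pi.2 fun j =>
    ((continuous_apply j).continuousAt).div (Complex.continuous_ofReal.comp
      (continuous_apply j).norm).continuousAt (by simpa using hz0 j)
  have hQR : Q '' range (fun t : Fin d → ℂˣ => monomial A fun i => t i) ⊆ monomial A '' S := by
    rintro _ ⟨_, ⟨t, rfl⟩, rfl⟩
    refine ⟨fun i => t i / ‖(t i : ℂ)‖, fun i _ => ?_, funext fun j => ?_⟩
    · simp [(t i).ne_zero]
    · change monomial A ((fun i => (t i : ℂ)) / fun i => (‖(t i : ℂ)‖ : ℂ)) j = _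
      rw [monomial_div, monomial_ofReal_norm]
  obtain ⟨θ, hθS, hθ⟩ :=
    closure_minimal hQR hK.isClosed (hQ.continuousWithinAt.mem_closure_image hz)
  exact ⟨θ, hS θ hθS, fun j => congrFun hθ j⟩

theorem exists_monomial_eq_of_mem_closure [Fintype J] {z : J → ℂ}
    (hz : z ∈ closure (range fun t : Fin d → ℂˣ => monomial A fun i => t i)) (hz0 : ∀ j, z j ≠ 0) :
    ∃ t : Fin d → ℂˣ, (monomial A fun i => t i) = z := by
  obtain ⟨x, hx⟩ := exists_log_norm_eq_dotProduct_of_mem_closure A hz hz0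
  obtain ⟨θ, hθ0, hθ⟩ := exists_monomial_eq_div_norm_of_mem_closure A hz hz0
  refine ⟨fun i => Units.mk0 (Real.exp (x i) * θ i) (mul_ne_zero (by simp) (hθ0 i)),
    funext fun j => ?_⟩
  have hnorm : (Real.exp (weight A j ⬝ᵥ x) : ℂ) = ‖z j‖ := by
    rw [hx, Real.exp_log (norm_pos_iff.2 (hz0 j))]
  change monomial A ((fun i => (Real.exp (x i) : ℂ)) * θ) j = z j
  rw [monomial_mul, monomial_exp_ofReal, hθ, hnorm,
    mul_div_cancel₀ _ (by simpa using hz0 j)]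

end Monomial

section NewtonCone

variable {d n : ℕ} (M : Matrix (Fin d) (Fin n) ℤ) (v : Fin n → ℂ)

theorem newtonCone_eq_hull : newtonCone M v = PointedCone.hull ℝ (weight M '' {j | v j ≠ 0}) := by
  classical
  ext y
  constructor
  · rintro ⟨c, hc, hcv, rfl⟩
    refine Submodule.sum_mem _ fun j _ => ?_
    by_cases hv : v j = 0
    · simp [hcv j hv]
    · exact PointedCone.smul_mem _ (hc j) (PointedCone.subset_hull ⟨j, hv, rfl⟩)
  · intro hy
    obtain ⟨t, hts, c, rfl⟩ := (Submodule.mem_span_image_iff_exists_fun _).1 hy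
    refine ⟨fun j => if h : j ∈ t then (c ⟨j, h⟩ : ℝ) else 0, fun j => ?_, fun j hj => ?_, ?_⟩
    · dsimp only
      split_ifs
      exacts [(c _).2, le_rfl]
    · exact dif_neg fun h => hts h hj
    · rw [← Finset.sum_subset (Finset.subset_univ t) fun j _ hj => by simp [hj],
        ← Finset.sum_coe_sort t]
      simp [Nonneg.coe_smul]

variable {M v}

lemma weight_mem_newtonCone {j : Fin n} (hj : v j ≠ 0) : weight M j ∈ newtonCone M v := by
  rw [newtonCone_eq_hull]
  exact PointedCone.subset_hull ⟨j, hj, rfl⟩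

lemma newtonCone_mono {w : Fin n → ℂ} (h : ∀ j, v j = 0 → w j = 0) :
    newtonCone M w ⊆ newtonCone M v := by
  rintro y ⟨c, hc, hcw, rfl⟩
  exact ⟨c, hc, fun j hv => hcw j (h j hv), rfl⟩

lemma mem_esupp_iff {j : Fin n} :
    j ∈ esupp M v ↔ v j ≠ 0 ∧ -weight M j ∈ newtonCone M v := by
  simp only [esupp, lineality, Set.mem_ofPred_eq, Set.mem_inter_iff, Set.mem_neg]
  exact ⟨fun h => ⟨h.1, h.2.2⟩, fun h => ⟨h.1, weight_mem_newtonCone h.1, h.2⟩⟩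

theorem newtonCone_eq_lineality_iff :
    newtonCone M v = lineality M v ↔ ∀ j, v j ≠ 0 → j ∈ esupp M v := by
  refine ⟨fun h j hj => ⟨hj, h ▸ weight_mem_newtonCone hj⟩, fun h => ?_⟩
  refine (Set.inter_eq_left.2 fun y hy => Set.mem_neg.2 ?_).symm
  rw [newtonCone_eq_hull] at hy ⊢
  refine PointedCone.neg_mem_hull_of_forall_neg_mem ?_ hy
  rintro _ ⟨j, hj, rfl⟩
  simpa [newtonCone_eq_hull] using (mem_esupp_iff.1 (h j hj)).2

variable (M v)

theorem exists_dotProduct_weight_eq_zero_iff_mem_esupp :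
    ∃ u : Fin d → ℝ, (∀ j, v j ≠ 0 → 0 ≤ weight M j ⬝ᵥ u) ∧
      ∀ j, v j ≠ 0 → (weight M j ⬝ᵥ u = 0 ↔ j ∈ esupp M v) := by
  classical
  obtain ⟨f, hf, hfpos⟩ :=
    PointedCone.exists_strongDual_pos_of_neg_notMem_hull
      ((Set.toFinite {j | v j ≠ 0}).image (weight M))
  simp only [← SetLike.mem_coe, ← newtonCone_eq_hull] at hf hfpos
  let u : Fin d → ℝ := fun i => f fun k => if i = k then 1 else 0
  have hfu : ∀ y, f y = y ⬝ᵥ u := fun y => by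
    simpa [dotProduct] using LinearMap.pi_apply_eq_sum_univ (f : (Fin d → ℝ) →ₗ[ℝ] ℝ) y
  refine ⟨u, fun j hj => hfu (weight M j) ▸ hf _ (weight_mem_newtonCone hj), fun j hj => ?_⟩
  rw [← hfu, mem_esupp_iff]
  refine ⟨fun h0 => ⟨hj, by_contra fun hneg => (hfpos _ ⟨j, hj, rfl⟩ hneg).ne' h0⟩,
    fun h => le_antisymm ?_ (hf _ (weight_mem_newtonCone hj))⟩
  simpa using hf _ h.2

lemma neg_weight_mem_newtonCone_indicator_esupp {j : Fin n} (hj : j ∈ esupp M v) :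
    -weight M j ∈ newtonCone M ((esupp M v).indicator v) := by
  obtain ⟨u, hu, hu_iff⟩ := exists_dotProduct_weight_eq_zero_iff_mem_esupp M v
  let f : (Fin d → ℝ) →ₗ[ℝ] ℝ := (dotProductBilin ℝ ℝ).flip u
  have hface := PointedCone.mem_hull_sep_of_map_eq_zero (f := f) (s := weight M '' {j | v j ≠ 0})
    (by rintro _ ⟨k, hk, rfl⟩; exact hu k hk) (newtonCone_eq_hull M v ▸ (mem_esupp_iff.1 hj).2)
    (by simp [f, (hu_iff j hj.1).2 hj])
  rw [newtonCone_eq_hull]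
  refine Submodule.span_mono ?_ hface
  rintro _ ⟨⟨k, hk, rfl⟩, hfk⟩
  have hke : k ∈ esupp M v := (hu_iff k hk).1 (by simpa [f] using hfk)
  exact ⟨k, show _ ≠ 0 by rwa [Set.indicator_of_mem hke], rfl⟩

theorem newtonCone_indicator_esupp_eq_lineality :
    newtonCone M ((esupp M v).indicator v) = lineality M ((esupp M v).indicator v) := by
  refine newtonCone_eq_lineality_iff.2 fun j hj => mem_esupp_iff.2 ⟨hj, ?_⟩
  have hje : j ∈ esupp M v := by
    by_contra h
    exact hj (Set.indicator_of_notMem h v)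
  exact neg_weight_mem_newtonCone_indicator_esupp M v hje

end NewtonCone

section TorusOrbit

variable {d n : ℕ} (M : Matrix (Fin d) (Fin n) ℤ)

lemma torusAct_apply (t : Fin d → ℂˣ) (v : Fin n → ℂ) (j : Fin n) :
    torusAct M t v j = monomial M (fun i => t i) j * v j := rfl

lemma torusAct_mul (t s : Fin d → ℂˣ) (v : Fin n → ℂ) :
    torusAct M (t * s) v = torusAct M t (torusAct M s v) := by
  funext j
  simp only [torusAct_apply, Pi.mul_apply, Units.val_mul]
  rw [show (fun i => (t i : ℂ) * s i) = (fun i => (t i : ℂ)) * fun i => (s i : ℂ) from rfl,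
    monomial_mul, mul_assoc]

lemma torusAct_one (v : Fin n → ℂ) : torusAct M 1 v = v := by
  funext j
  simp [torusAct]

lemma torusAct_eq_zero_iff (t : Fin d → ℂˣ) (v : Fin n → ℂ) (j : Fin n) :
    torusAct M t v j = 0 ↔ v j = 0 := by
  simp [torusAct_apply, monomial_ne_zero M fun i => (t i).ne_zero]

lemma continuous_torusAct (t : Fin d → ℂˣ) : Continuous (torusAct M t) :=
  continuous_pi fun j => continuous_const.mul (continuous_apply j)

lemma torusAct_indicator (E : Set (Fin n)) (t : Fin d → ℂˣ) (v : Fin n → ℂ) :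
    torusAct M t (E.indicator v) = E.indicator (torusAct M t v) := by
  funext j
  by_cases hj : j ∈ E <;> simp [torusAct_apply, hj]

variable {M}

lemma mem_torusOrbit_self (v : Fin n → ℂ) : v ∈ torusOrbit M v :=
  ⟨1, (torusAct_one M v).symm⟩

lemma torusOrbit_eq_of_mem {v w : Fin n → ℂ} (h : w ∈ torusOrbit M v) :
    torusOrbit M w = torusOrbit M v := by
  obtain ⟨t, rfl⟩ := h
  ext p
  constructor
  · rintro ⟨s, rfl⟩
    exact ⟨s * t, (torusAct_mul M s t v).symm⟩
  · rintro ⟨s, rfl⟩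
    exact ⟨s * t⁻¹, by rw [← torusAct_mul, inv_mul_cancel_right]⟩

lemma torusOrbit_subset_closure_of_mem {v w : Fin n → ℂ} (h : w ∈ closure (torusOrbit M v)) :
    torusOrbit M w ⊆ closure (torusOrbit M v) := by
  rintro _ ⟨t, rfl⟩
  refine map_mem_closure (continuous_torusAct M t) h ?_
  rintro _ ⟨s, rfl⟩
  exact ⟨t * s, (torusAct_mul M t s v).symm⟩

lemma eq_zero_of_mem_closure_torusOrbit {v w : Fin n → ℂ} (hw : w ∈ closure (torusOrbit M v))
    {j : Fin n} (hv : v j = 0) : w j = 0 := by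
  refine closure_minimal (t := {p : Fin n → ℂ | p j = 0}) ?_
    (isClosed_eq (continuous_apply j) continuous_const) hw
  rintro _ ⟨t, rfl⟩
  exact (torusAct_eq_zero_iff M t v j).2 hv

lemma indicator_mem_closure_torusOrbit_indicator {v w : Fin n → ℂ}
    (hw : w ∈ closure (torusOrbit M v)) (E : Set (Fin n)) :
    E.indicator w ∈ closure (torusOrbit M (E.indicator v)) := by
  have hE : Continuous fun p : Fin n → ℂ => E.indicator p :=
    continuous_pi fun j => by by_cases hj : j ∈ E <;> simp [hj, continuous_apply, continuous_const]
  refine map_mem_closure hE hw ?_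
  rintro _ ⟨t, rfl⟩
  exact ⟨t, (torusAct_indicator M E t v).symm⟩

theorem mem_torusOrbit_of_mem_closure {v w : Fin n → ℂ} (hw : w ∈ closure (torusOrbit M v))
    (hsupp : ∀ j, v j ≠ 0 → w j ≠ 0) : w ∈ torusOrbit M v := by
  let A : Matrix (Fin d) {j // v j ≠ 0} ℤ := M.submatrix id Subtype.val
  let D : (Fin n → ℂ) → {j // v j ≠ 0} → ℂ := fun p j => p j / v j
  have hD : Continuous D := continuous_pi fun j => (continuous_apply j.1).div_const _
  have hDorbit :
      MapsTo D (torusOrbit M v) (range fun t : Fin d → ℂˣ => monomial A fun i => t i) := by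
    rintro _ ⟨t, rfl⟩
    exact ⟨t, funext fun j => (mul_div_cancel_right₀ _ j.2).symm⟩
  obtain ⟨t, ht⟩ := exists_monomial_eq_of_mem_closure A (map_mem_closure hD hw hDorbit)
    fun j => div_ne_zero (hsupp j j.2) j.2
  refine ⟨t, funext fun j => ?_⟩
  by_cases hv : v j = 0
  · rw [eq_zero_of_mem_closure_torusOrbit hw hv, (torusAct_eq_zero_iff M t v j).2 hv]
  · rw [torusAct_apply, show monomial M (fun i => t i) j = w j / v j from congrFun ht ⟨j, hv⟩,
      div_mul_cancel₀ _ hv]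

theorem indicator_mem_closure_torusOrbit (v : Fin n → ℂ) (u : Fin d → ℝ)
    (hu : ∀ j, v j ≠ 0 → 0 ≤ weight M j ⬝ᵥ u) :
    {j | weight M j ⬝ᵥ u = 0}.indicator v ∈ closure (torusOrbit M v) := by
  let t : ℕ → Fin d → ℂˣ := fun s i => Units.mk0 (Real.exp ((-(s : ℝ) • u) i) : ℂ) (by simp)
  have ht : ∀ s j, torusAct M (t s) v j = Real.exp (-(s * (weight M j ⬝ᵥ u))) * v j := by
    intro s j
    change monomial M (fun i => (Real.exp ((-(s : ℝ) • u) i) : ℂ)) j * v j = _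
    rw [monomial_exp_ofReal, dotProduct_smul, smul_eq_mul, neg_mul]
  refine mem_closure_of_tendsto (f := fun s => torusAct M (t s) v) (b := atTop)
    (tendsto_pi_nhds.2 fun j => ?_) (Eventually.of_forall fun s => ⟨t s, rfl⟩)
  simp only [ht]
  by_cases hv : v j = 0
  · simp [hv, Set.indicator_apply]
  by_cases h0 : weight M j ⬝ᵥ u = 0
  · simp [h0]
  have hpos : 0 < weight M j ⬝ᵥ u := (hu j hv).lt_of_ne' h0
  rw [Set.indicator_of_notMem (show j ∉ {j | weight M j ⬝ᵥ u = 0} from h0)]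
  have hexp : Tendsto (fun s : ℕ => Real.exp (-(s * (weight M j ⬝ᵥ u)))) atTop (𝓝 0) :=
    Real.tendsto_exp_neg_atTop_nhds_zero.comp
      (tendsto_natCast_atTop_atTop.atTop_mul_const hpos)
  simpa using ((Complex.continuous_ofReal.tendsto 0).comp hexp).mul_const (v j)

end TorusOrbit

section ClosedOrbit

variable {d n : ℕ} {M : Matrix (Fin d) (Fin n) ℤ}

lemma exists_nonneg_relation_of_mem_esupp {v : Fin n → ℂ} {j : Fin n} (hj : j ∈ esupp M v) :
    ∃ b : Fin n → ℝ, 0 ≤ b ∧ 0 < b j ∧ (∀ k, v k = 0 → b k = 0) ∧ ∑ k, b k • weight M k = 0 := by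
  obtain ⟨hvj, c, hc, hcv, hsum⟩ := mem_esupp_iff.1 hj
  refine ⟨c + Pi.single j 1, fun k => add_nonneg (hc k) ?_, ?_, fun k hk => ?_, ?_⟩
  · by_cases hk : k = j <;> simp [hk]
  · simpa using add_pos_of_nonneg_of_pos (hc j) one_pos
  · have hkj : k ≠ j := fun h => hvj (h ▸ hk)
    simp [hcv k hk, hkj]
  · simp only [Pi.add_apply, add_smul, Finset.sum_add_distrib, Pi.single_apply, ite_smul,
      one_smul, zero_smul, Finset.sum_ite_eq', Finset.mem_univ, if_true]
    rw [← hsum, neg_add_cancel]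

lemma prod_norm_torusAct_rpow {b : Fin n → ℝ}
    (hrel : ∑ k, b k • weight M k = 0) (t : Fin d → ℂˣ) (v : Fin n → ℂ) :
    ∏ k, ‖torusAct M t v k‖ ^ b k = ∏ k, ‖v k‖ ^ b k := by
  have ht : ∀ i, (t i : ℂ) ≠ 0 := fun i => (t i).ne_zero
  have hmono : ∏ k, ‖monomial M (fun i => t i) k‖ ^ b k = 1 := by
    calc ∏ k, ‖monomial M (fun i => t i) k‖ ^ b k
        = ∏ k, Real.exp (Real.log ‖monomial M (fun i => t i) k‖ * b k) :=
          Finset.prod_congr rfl fun k _ =>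
            Real.rpow_def_of_pos (norm_pos_iff.2 (monomial_ne_zero M ht k)) _
      _ = Real.exp ((∑ k, b k • weight M k) ⬝ᵥ fun i => Real.log ‖(t i : ℂ)‖) := by
          simp only [← Real.exp_sum, log_norm_monomial M ht, sum_dotProduct, smul_dotProduct,
            smul_eq_mul, mul_comm]
      _ = 1 := by rw [hrel, zero_dotProduct, Real.exp_zero]
  simp only [torusAct_apply, norm_mul, Real.mul_rpow (norm_nonneg _) (norm_nonneg _),
    Finset.prod_mul_distrib, hmono, one_mul]

theorem ne_zero_of_mem_closure_torusOrbit {v w : Fin n → ℂ} (hw : w ∈ closure (torusOrbit M v))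
    {j : Fin n} (hj : j ∈ esupp M v) : w j ≠ 0 := by
  obtain ⟨b, hb, hbj, hbv, hrel⟩ := exists_nonneg_relation_of_mem_esupp hj
  let F : (Fin n → ℂ) → ℝ := fun p => ∏ k, ‖p k‖ ^ b k
  have hF : Continuous F := continuous_finsetProd _ fun k _ =>
    (continuous_apply k).norm.rpow_const fun _ => Or.inr (hb k)
  have hFw : F w = F v := by
    refine closure_minimal (t := F ⁻¹' {F v}) ?_ (isClosed_singleton.preimage hF) hw
    rintro _ ⟨t, rfl⟩
    exact prod_norm_torusAct_rpow hrel t v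
  have hFv : 0 < F v := Finset.prod_pos fun k _ => by
    by_cases hvk : v k = 0
    · simp [hbv k hvk]
    · exact Real.rpow_pos_of_pos (norm_pos_iff.2 hvk) _
  intro hwj
  have hF0 : F w = 0 := Finset.prod_eq_zero (Finset.mem_univ j) (by simp [hwj, hbj.ne'])
  exact hFv.ne' (hFw ▸ hF0)

theorem esupp_eq_of_mem_closure {v w : Fin n → ℂ} (hw : w ∈ closure (torusOrbit M v)) :
    esupp M w = esupp M v := by
  have hsupp : ∀ k, v k = 0 → w k = 0 := fun k hk => eq_zero_of_mem_closure_torusOrbit hw hk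
  ext j
  constructor
  · intro hj
    obtain ⟨hwj, hneg⟩ := mem_esupp_iff.1 hj
    exact mem_esupp_iff.2 ⟨fun hv => hwj (hsupp j hv), newtonCone_mono hsupp hneg⟩
  · intro hj
    refine mem_esupp_iff.2 ⟨ne_zero_of_mem_closure_torusOrbit hw hj,
      newtonCone_mono (fun k hk => ?_) (neg_weight_mem_newtonCone_indicator_esupp M v hj)⟩
    exact Set.indicator_of_notMem (fun hke => ne_zero_of_mem_closure_torusOrbit hw hke hk) v

theorem isClosed_torusOrbit_of_newtonCone_eq_lineality {v : Fin n → ℂ}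
    (h : newtonCone M v = lineality M v) : IsClosed (torusOrbit M v) :=
  closure_subset_iff_isClosed.1 fun _ hw => mem_torusOrbit_of_mem_closure hw fun j hj =>
    ne_zero_of_mem_closure_torusOrbit hw (newtonCone_eq_lineality_iff.1 h j hj)

theorem isClosed_torusOrbit_indicator_esupp (v : Fin n → ℂ) :
    IsClosed (torusOrbit M ((esupp M v).indicator v)) :=
  isClosed_torusOrbit_of_newtonCone_eq_lineality (newtonCone_indicator_esupp_eq_lineality M v)

theorem indicator_esupp_mem_closure_torusOrbit (v : Fin n → ℂ) :
    (esupp M v).indicator v ∈ closure (torusOrbit M v) := by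
  obtain ⟨u, hu, hu_iff⟩ := exists_dotProduct_weight_eq_zero_iff_mem_esupp M v
  convert indicator_mem_closure_torusOrbit v u hu using 1
  funext j
  by_cases hv : v j = 0
  · simp [Set.indicator_apply, hv]
  by_cases he : j ∈ esupp M v
  · rw [Set.indicator_of_mem he]
    exact (Set.indicator_of_mem (s := {j | weight M j ⬝ᵥ u = 0}) ((hu_iff j hv).2 he) v).symm
  · rw [Set.indicator_of_notMem he]
    exact (Set.indicator_of_notMem (s := {j | weight M j ⬝ᵥ u = 0}) (mt (hu_iff j hv).1 he) v).symm

theorem newtonCone_eq_lineality_of_isClosed {v : Fin n → ℂ} (h : IsClosed (torusOrbit M v)) :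
    newtonCone M v = lineality M v := by
  obtain ⟨t, ht⟩ := h.closure_eq ▸ indicator_esupp_mem_closure_torusOrbit (M := M) v
  refine newtonCone_eq_lineality_iff.2 fun j hj => by_contra fun hje => hj ?_
  exact (torusAct_eq_zero_iff M t v j).1 (ht ▸ Set.indicator_of_notMem hje v)

theorem torusOrbit_indicator_esupp_subset_closure {v w : Fin n → ℂ}
    (h : closure (torusOrbit M w) ⊆ closure (torusOrbit M v)) :
    torusOrbit M ((esupp M v).indicator v) ⊆ closure (torusOrbit M w) := by
  have hw : w ∈ closure (torusOrbit M v) := h (subset_closure (mem_torusOrbit_self w))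
  have hmem : (esupp M v).indicator w ∈ torusOrbit M ((esupp M v).indicator v) :=
    (isClosed_torusOrbit_indicator_esupp v).closure_eq ▸
      indicator_mem_closure_torusOrbit_indicator hw _
  rw [← torusOrbit_eq_of_mem hmem, ← esupp_eq_of_mem_closure hw]
  exact torusOrbit_subset_closure_of_mem (indicator_esupp_mem_closure_torusOrbit w)

end ClosedOrbit

/-- The orbit of `ṽ := v|_{esupp v}` is contained in every orbit closure contained in
`closure (O_v)`; consequently it is the unique closed orbit in `closure (O_v)`, and `O_v` is
closed iff the Newton cone `C(v)` equals its lineality space `L(v)`. -/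
theorem closed_orbit_in_orbit_closure {d n : ℕ} (M : Matrix (Fin d) (Fin n) ℤ)
    (v : Fin n → ℂ) :
    torusOrbit M ((esupp M v).indicator v) ⊆ closure (torusOrbit M v) ∧
    (∀ w : Fin n → ℂ, closure (torusOrbit M w) ⊆ closure (torusOrbit M v) →
      torusOrbit M ((esupp M v).indicator v) ⊆ closure (torusOrbit M w)) ∧
    IsClosed (torusOrbit M ((esupp M v).indicator v)) ∧
    (∀ w : Fin n → ℂ, IsClosed (torusOrbit M w) →
      torusOrbit M w ⊆ closure (torusOrbit M v) →
      torusOrbit M w = torusOrbit M ((esupp M v).indicator v)) ∧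
    (IsClosed (torusOrbit M v) ↔ newtonCone M v = lineality M v) := by
  refine ⟨torusOrbit_subset_closure_of_mem (indicator_esupp_mem_closure_torusOrbit v),
    fun w => torusOrbit_indicator_esupp_subset_closure, isClosed_torusOrbit_indicator_esupp v,
    fun w hw hsub => ?_,
    ⟨newtonCone_eq_lineality_of_isClosed, isClosed_torusOrbit_of_newtonCone_eq_lineality⟩⟩
  have hmem := torusOrbit_indicator_esupp_subset_closure (closure_minimal hsub isClosed_closure)
    (mem_torusOrbit_self ((esupp M v).indicator v))
  rw [hw.closure_eq] at hmem
  exact (torusOrbit_eq_of_mem hmem).symm
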